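/- Let P, Q be probability measures with densities p, q with respect to λ, such that ∫ p |log(p/q)|³ dλ and ∫ q |log(p/q)|³ dλ are both finite. Then Z(α) = ∫ p^α q^{1−α} dλ is three times differentiable on (0,1), with Z″(α) = ∫ p^α q^{1−α} (log(p/q))² dλ and Z‴(α) = ∫ p^α q^{1−α} (log(p/q))³ dλ. -/

import Mathlib

/-!
Differentiate under the integral sign: in `a`, the integrand `p ^ a * q ^ (1 - a) * log (p / q) ^ k`
has derivative `p ^ a * q ^ (1 - a) * log (p / q) ^ (k + 1)` (both vanish near `a` when `p = 0` or
`q = 0`), and for `a ∈ [0, 1]` and `j ≤ 3` weighted AM-GM gives the uniform domination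
`|p ^ a * q ^ (1 - a) * log (p / q) ^ j| ≤ (p + q) * (1 + |log (p / q)| ^ 3)`, which is integrable
because `p`, `q` are probability densities with finite third absolute log-moments.
-/

open MeasureTheory Real Set Topology

lemma rpow_mul_rpow_one_sub_eq_zero {p q b : ℝ} (hpq : p = 0 ∨ q = 0) (hb : b ∈ Ioo (0 : ℝ) 1) :
    p ^ b * q ^ (1 - b) = 0 := by
  rcases hpq with rfl | rfl
  · rw [zero_rpow hb.1.ne', zero_mul]
  · rw [zero_rpow (sub_pos.2 hb.2).ne', mul_zero]

lemma hasDerivAt_rpow_mul_rpow_one_sub {p q a : ℝ} (hp : 0 ≤ p) (hq : 0 ≤ q)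
    (ha : a ∈ Ioo (0 : ℝ) 1) :
    HasDerivAt (fun b => p ^ b * q ^ (1 - b)) (p ^ a * q ^ (1 - a) * log (p / q)) a := by
  by_cases hpq : p = 0 ∨ q = 0
  · rw [rpow_mul_rpow_one_sub_eq_zero hpq ha, zero_mul]
    refine (hasDerivAt_const a (0 : ℝ)).congr_of_eventuallyEq ?_
    filter_upwards [isOpen_Ioo.mem_nhds ha] with b hb using rpow_mul_rpow_one_sub_eq_zero hpq hb
  push Not at hpq
  have hp' : 0 < p := hp.lt_of_ne' hpq.1
  have hq' : 0 < q := hq.lt_of_ne' hpq.2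
  have hpow := ((hasDerivAt_id a).const_rpow hp').mul
    ((hasDerivAt_id a).const_sub 1 |>.const_rpow hq')
  refine hpow.congr_deriv ?_
  rw [log_div hp'.ne' hq'.ne']
  simp only [id]
  ring

lemma hasDerivAt_rpow_mul_rpow_one_sub_mul_log_div_pow {p q a : ℝ} (hp : 0 ≤ p) (hq : 0 ≤ q)
    (ha : a ∈ Ioo (0 : ℝ) 1) (k : ℕ) :
    HasDerivAt (fun b => p ^ b * q ^ (1 - b) * log (p / q) ^ k)
      (p ^ a * q ^ (1 - a) * log (p / q) ^ (k + 1)) a := by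
  refine ((hasDerivAt_rpow_mul_rpow_one_sub hp hq ha).mul_const (log (p / q) ^ k)).congr_deriv ?_
  ring

lemma rpow_mul_rpow_one_sub_le_add {p q a : ℝ} (hp : 0 ≤ p) (hq : 0 ≤ q)
    (ha : a ∈ Icc (0 : ℝ) 1) : p ^ a * q ^ (1 - a) ≤ p + q :=
  calc p ^ a * q ^ (1 - a) ≤ a * p + (1 - a) * q :=
        geom_mean_le_arith_mean2_weighted ha.1 (sub_nonneg.2 ha.2) hp hq (add_sub_cancel a 1)
    _ ≤ p + q := by nlinarith [ha.1, ha.2]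

lemma pow_le_one_add_pow {t : ℝ} (ht : 0 ≤ t) {j n : ℕ} (hjn : j ≤ n) : t ^ j ≤ 1 + t ^ n := by
  rcases le_total t 1 with h | h
  · linarith [pow_le_one₀ ht h (n := j), pow_nonneg ht n]
  · linarith [pow_le_pow_right₀ h hjn]

lemma norm_rpow_mul_rpow_one_sub_mul_pow_le {p q a : ℝ} (hp : 0 ≤ p) (hq : 0 ≤ q)
    (ha : a ∈ Icc (0 : ℝ) 1) (L : ℝ) {j n : ℕ} (hjn : j ≤ n) :
    ‖p ^ a * q ^ (1 - a) * L ^ j‖ ≤ (p + q) * (1 + |L| ^ n) := by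
  rw [norm_mul, norm_pow, Real.norm_of_nonneg (by positivity), Real.norm_eq_abs]
  exact mul_le_mul (rpow_mul_rpow_one_sub_le_add hp hq ha) (pow_le_one_add_pow (abs_nonneg L) hjn)
    (by positivity) (by positivity)

lemma hasDerivAt_deriv_of_forall_hasDerivAt {f g : ℝ → ℝ} {U : Set ℝ} {a g' : ℝ} (hU : U ∈ 𝓝 a)
    (hf : ∀ b ∈ U, HasDerivAt f (g b) b) (hg : HasDerivAt g g' a) : HasDerivAt (deriv f) g' a :=
  hg.congr_of_eventuallyEq <| Filter.eventually_of_mem hU fun b hb => (hf b hb).deriv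

/-- `Z⁽ᵏ⁾(a)`, where `Z(a) = ∫ p ^ a * q ^ (1 - a) dμ = tiltedLogMoment μ p q 0 a`. -/
noncomputable def tiltedLogMoment {A : Type*} [MeasurableSpace A] (μ : Measure A) (p q : A → ℝ)
    (k : ℕ) (a : ℝ) : ℝ :=
  ∫ x, p x ^ a * q x ^ (1 - a) * log (p x / q x) ^ k ∂μ

lemma hasDerivAt_tiltedLogMoment {A : Type*} [MeasurableSpace A] {μ : Measure A} {p q : A → ℝ}
    (hp : Measurable p) (hq : Measurable q)
    (hp0 : ∀ x, 0 ≤ p x) (hq0 : ∀ x, 0 ≤ q x) (hpi : Integrable p μ) (hqi : Integrable q μ)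
    {n : ℕ} (hPn : Integrable (fun x => p x * |log (p x / q x)| ^ n) μ)
    (hQn : Integrable (fun x => q x * |log (p x / q x)| ^ n) μ)
    {k : ℕ} (hk : k < n) {α : ℝ} (hα : α ∈ Ioo (0 : ℝ) 1) :
    HasDerivAt (tiltedLogMoment μ p q k) (tiltedLogMoment μ p q (k + 1) α) α := by
  set bound := fun x => (p x + q x) * (1 + |log (p x / q x)| ^ n)
  have hbound : Integrable bound μ := by
    refine ((hpi.add hqi).add (hPn.add hQn)).congr (.of_forall fun x => ?_)
    simp only [bound, Pi.add_apply]
    ring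
  have hmeas : ∀ (a : ℝ) (j : ℕ),
      AEStronglyMeasurable (fun x => p x ^ a * q x ^ (1 - a) * log (p x / q x) ^ j) μ :=
    fun a j => by fun_prop
  have hle : ∀ a ∈ Ioo (0 : ℝ) 1, ∀ j ≤ n, ∀ x,
      ‖p x ^ a * q x ^ (1 - a) * log (p x / q x) ^ j‖ ≤ bound x :=
    fun a ha j hj x =>
      norm_rpow_mul_rpow_one_sub_mul_pow_le (hp0 x) (hq0 x) (Ioo_subset_Icc_self ha) _ hj
  exact (hasDerivAt_integral_of_dominated_loc_of_deriv_le (isOpen_Ioo.mem_nhds hα)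
    (.of_forall fun a => hmeas a k) (hbound.mono' (hmeas α k) (.of_forall (hle α hα k hk.le)))
    (hmeas α (k + 1)) (.of_forall fun x a ha => hle a ha (k + 1) hk x) hbound
    (.of_forall fun x a ha =>
      hasDerivAt_rpow_mul_rpow_one_sub_mul_log_div_pow (hp0 x) (hq0 x) ha k)).2

theorem Z_second_third_derivatives_general {A : Type*} [MeasurableSpace A]
    (μ : Measure A)
    (p q : A → ℝ) (hp : Measurable p) (hq : Measurable q)
    (hp0 : ∀ x, 0 ≤ p x) (hq0 : ∀ x, 0 ≤ q x)
    (hpint : ∫ x, p x ∂μ = 1) (hqint : ∫ x, q x ∂μ = 1)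
    (hP3 : Integrable (fun x => p x * |Real.log (p x / q x)|^3) μ)
    (hQ3 : Integrable (fun x => q x * |Real.log (p x / q x)|^3) μ) :
    ∀ α ∈ Set.Ioo (0:ℝ) 1,
      HasDerivAt (deriv (fun a : ℝ => ∫ x, p x ^ a * q x ^ (1-a) ∂μ))
        (∫ x, p x ^ α * q x ^ (1-α) * (Real.log (p x / q x))^2 ∂μ) α ∧
      HasDerivAt (deriv (deriv (fun a : ℝ => ∫ x, p x ^ a * q x ^ (1-a) ∂μ)))
        (∫ x, p x ^ α * q x ^ (1-α) * (Real.log (p x / q x))^3 ∂μ) α := by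
  set M := tiltedLogMoment μ p q
  have hZ : (fun a : ℝ => ∫ x, p x ^ a * q x ^ (1 - a) ∂μ) = M 0 := by
    funext a; simp [M, tiltedLogMoment]
  have hM : ∀ k < 3, ∀ a ∈ Ioo (0 : ℝ) 1, HasDerivAt (M k) (M (k + 1) a) a :=
    fun k hk a ha => hasDerivAt_tiltedLogMoment hp hq hp0 hq0
      (.of_integral_ne_zero (by simp [hpint])) (.of_integral_ne_zero (by simp [hqint]))
      hP3 hQ3 hk ha
  intro α hα
  have hU : ∀ {a}, a ∈ Ioo (0 : ℝ) 1 → Ioo (0 : ℝ) 1 ∈ 𝓝 a := isOpen_Ioo.mem_nhds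
  have hM₂ : ∀ a ∈ Ioo (0 : ℝ) 1, HasDerivAt (deriv (M 0)) (M 2 a) a := fun a ha =>
    hasDerivAt_deriv_of_forall_hasDerivAt (hU ha) (hM 0 (by norm_num)) (hM 1 (by norm_num) a ha)
  rw [hZ]
  exact ⟨hM₂ α hα,
    hasDerivAt_deriv_of_forall_hasDerivAt (hU hα) hM₂ (hM 2 (by norm_num) α hα)⟩

theorem Z_second_third_derivatives {A : Type*} [MeasurableSpace A]
    (μ : Measure A) [SigmaFinite μ]
    (p q : A → ℝ) (hp : Measurable p) (hq : Measurable q)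
    (hp0 : ∀ x, 0 ≤ p x) (hq0 : ∀ x, 0 ≤ q x)
    (hpint : ∫ x, p x ∂μ = 1) (hqint : ∫ x, q x ∂μ = 1)
    (hP3 : Integrable (fun x => p x * |Real.log (p x / q x)|^3) μ)
    (hQ3 : Integrable (fun x => q x * |Real.log (p x / q x)|^3) μ) :
    ∀ α ∈ Set.Ioo (0:ℝ) 1,
      HasDerivAt (deriv (fun a : ℝ => ∫ x, p x ^ a * q x ^ (1-a) ∂μ))
        (∫ x, p x ^ α * q x ^ (1-α) * (Real.log (p x / q x))^2 ∂μ) α ∧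
      HasDerivAt (deriv (deriv (fun a : ℝ => ∫ x, p x ^ a * q x ^ (1-a) ∂μ)))
        (∫ x, p x ^ α * q x ^ (1-α) * (Real.log (p x / q x))^3 ∂μ) α :=
  Z_second_third_derivatives_general μ p q hp hq hp0 hq0 hpint hqint hP3 hQ3
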